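/- Let q₁, q₂ : [0,2] → ℍ be continuous paths in the real quaternions with q₁(t) ≠ 0 and q₂(t) ≠ 0 for all t, and suppose that conj(q₁(t))·i·q₁(t) = conj(q₂(t))·i·q₂(t) and conj(q₁(t))·j·q₁(t)/|q₁(t)|² = conj(q₂(t))·j·q₂(t)/|q₂(t)|² for every t ∈ [0,2]. Then either q₂(t) = q₁(t) for all t ∈ [0,2], or q₂(t) = −q₁(t) for all t ∈ [0,2]. (The frame-Hopf map is two-to-one: H(q₁) = H(q₂) if and only if q₁ = ±q₂.) -/

import Mathlib

open scoped Quaternion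

noncomputable section

/-- The quaternion `i`. -/
def qI : ℍ[ℝ] := ⟨0, 1, 0, 0⟩

/-- The quaternion `j`. -/
def qJ : ℍ[ℝ] := ⟨0, 0, 1, 0⟩

end

/-!
If `q₁(t)` and `q₂(t)` give the same frame, taking norms gives `|q₁(t)| = |q₂(t)|`, and then
conjugation by `q₁(t)` and by `q₂(t)` agree on `i` and `j`. So `u(t) = q₂(t) q₁(t)⁻¹` commutes
with `i` and `j`, hence is real, and has norm `1`: `u(t) = ±1`. Now `u` is continuous on the
connected interval `[0,2]` with values in the discrete set `{1, -1}`, so it is constant.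
-/

namespace Quaternion

theorem normSq_eq_of_star_mul_mul_eq {a b x : ℍ[ℝ]} (hx : x ≠ 0)
    (h : star a * x * a = star b * x * b) : normSq a = normSq b := by
  have h2 := congrArg normSq h
  simp only [map_mul, normSq_star] at h2
  have hsq : normSq a ^ 2 = normSq b ^ 2 := by
    apply mul_right_cancel₀ (normSq_ne_zero.2 hx)
    linear_combination h2
  exact (pow_left_inj₀ normSq_nonneg normSq_nonneg two_ne_zero).1 hsq

theorem star_eq_normSq_mul_inv (a : ℍ[ℝ]) : star a = normSq a * a⁻¹ := by
  rcases eq_or_ne a 0 with rfl | ha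
  · simp
  · rw [← star_mul_self, mul_inv_cancel_right₀ ha]

theorem commute_mul_inv_of_star_mul_mul_eq {a b x : ℍ[ℝ]} (ha : a ≠ 0)
    (hn : normSq a = normSq b) (h : star a * x * a = star b * x * b) :
    Commute (b * a⁻¹) x := by
  have hn0 : ((normSq a : ℝ) : ℍ[ℝ]) ≠ 0 := by
    rw [Ne, ← coe_zero, coe_inj]
    exact normSq_ne_zero.2 ha
  have hb : b ≠ 0 := by rwa [← normSq_ne_zero, ← hn, normSq_ne_zero]
  have hconj : a⁻¹ * x * a = b⁻¹ * x * b := by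
    rw [star_eq_normSq_mul_inv, star_eq_normSq_mul_inv, ← hn] at h
    exact mul_left_cancel₀ hn0 (by simpa only [mul_assoc] using h)
  calc b * a⁻¹ * x = b * (a⁻¹ * x * a) * a⁻¹ := by
        simp only [mul_assoc, mul_inv_cancel_right₀ ha]
    _ = b * (b⁻¹ * x * b) * a⁻¹ := by rw [hconj]
    _ = x * (b * a⁻¹) := by simp only [← mul_assoc, mul_inv_cancel₀ hb, one_mul]

theorem sq_eq_normSq_of_eq_coe_re {c : ℍ[ℝ]} (hc : c = c.re) : c ^ 2 = normSq c := by
  rw [hc, normSq_coe, coe_pow]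

end Quaternion

open Quaternion

theorem eq_coe_re_of_commute_qI_of_commute_qJ {c : ℍ[ℝ]} (hI : Commute c qI)
    (hJ : Commute c qJ) : c = c.re := by
  have hIj := congrArg QuaternionAlgebra.imJ hI.eq
  have hIk := congrArg QuaternionAlgebra.imK hI.eq
  have hJk := congrArg QuaternionAlgebra.imK hJ.eq
  rw [imJ_mul, imJ_mul] at hIj
  rw [imK_mul, imK_mul] at hIk hJk
  simp only [qI, qJ, mul_zero, zero_mul, mul_one, one_mul, add_zero, zero_add, sub_self, sub_zero,
    zero_sub] at hIj hIk hJk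
  ext <;> simp only [re_coe, imI_coe, imJ_coe, imK_coe] <;> linarith

theorem mul_inv_sq_eq_one_of_frame_eq {a b : ℍ[ℝ]} (ha : a ≠ 0)
    (hγ : star a * qI * a = star b * qI * b)
    (hV : star a * qJ * a / ((‖a‖ ^ 2 : ℝ) : ℍ[ℝ]) = star b * qJ * b / ((‖b‖ ^ 2 : ℝ) : ℍ[ℝ])) :
    (b * a⁻¹) ^ 2 = 1 := by
  have hqI : qI ≠ 0 := fun h => by simpa [qI] using congrArg QuaternionAlgebra.imI h
  have hn := normSq_eq_of_star_mul_mul_eq hqI hγ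
  have hnorm : ‖a‖ ^ 2 = ‖b‖ ^ 2 := by simp only [sq, ← normSq_eq_norm_mul_self, hn]
  have hJ : star a * qJ * a = star b * qJ * b := by
    rw [← hnorm] at hV
    refine (div_left_inj' ?_).1 hV
    rw [Ne, ← coe_zero, coe_inj]
    exact pow_ne_zero 2 (norm_ne_zero_iff.2 ha)
  have hreal : b * a⁻¹ = (b * a⁻¹).re := eq_coe_re_of_commute_qI_of_commute_qJ
    (commute_mul_inv_of_star_mul_mul_eq ha hn hγ) (commute_mul_inv_of_star_mul_mul_eq ha hn hJ)
  rw [sq_eq_normSq_of_eq_coe_re hreal, map_mul, normSq_inv, ← hn,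
    mul_inv_cancel₀ (normSq_ne_zero.2 ha), coe_one]

theorem frame_hopf_two_to_one
    (q₁ q₂ : ℝ → ℍ[ℝ])
    (hc₁ : ContinuousOn q₁ (Set.Icc 0 2))
    (hc₂ : ContinuousOn q₂ (Set.Icc 0 2))
    (hne₁ : ∀ t ∈ Set.Icc (0:ℝ) 2, q₁ t ≠ 0)
    (hγ : ∀ t ∈ Set.Icc (0:ℝ) 2,
      star (q₁ t) * qI * q₁ t = star (q₂ t) * qI * q₂ t)
    (hV : ∀ t ∈ Set.Icc (0:ℝ) 2,
      (star (q₁ t) * qJ * q₁ t) / ((‖q₁ t‖ ^ 2 : ℝ) : ℍ[ℝ])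
        = (star (q₂ t) * qJ * q₂ t) / ((‖q₂ t‖ ^ 2 : ℝ) : ℍ[ℝ])) :
    (∀ t ∈ Set.Icc (0:ℝ) 2, q₂ t = q₁ t) ∨
    (∀ t ∈ Set.Icc (0:ℝ) 2, q₂ t = -(q₁ t)) := by
  have hu : ContinuousOn (fun t => q₂ t * (q₁ t)⁻¹) (Set.Icc 0 2) := hc₂.mul (hc₁.inv₀ hne₁)
  have hsq : Set.EqOn ((fun t => q₂ t * (q₁ t)⁻¹) ^ 2) 1 (Set.Icc 0 2) := fun t ht =>
    mul_inv_sq_eq_one_of_frame_eq (hne₁ t ht) (hγ t ht) (hV t ht)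
  rcases isPreconnected_Icc.eq_one_or_eq_neg_one_of_sq_eq hu hsq with h | h
  · exact Or.inl fun t ht => (mul_inv_eq_one₀ (hne₁ t ht)).1 (h ht)
  · exact Or.inr fun t ht => by simpa using (mul_inv_eq_iff_eq_mul₀ (hne₁ t ht)).1 (h ht)
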